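/- arXiv:1603.03950 — 3 statements merged into one kernel-verified Lean document; each statement's English description precedes it below -/
import Mathlib

section
/- Let α > 0 and c ∈ ℝ. Then ∫_ℝ Φ(α v − c) e^{−v} dv = exp(0.5/α² − c/α), where the integral is with respect to Lebesgue measure on ℝ (the integrand is Lebesgue integrable on ℝ). -/
/-! Write `Φ x = ℙ(Z ≤ x)` for a standard Gaussian `Z`. By Tonelli,
`∫ ℙ(Z ≤ α v - c) e^{-v} dv = 𝔼 ∫_{(Z + c)/α}^∞ e^{-v} dv = 𝔼 e^{-(Z + c)/α} = e^{-c/α} M_Z(-1/α)`,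
and the moment generating function of `Z` is `M_Z(t) = e^{t²/2}`. -/

open MeasureTheory Filter Set

/-- The standard normal cumulative distribution function `Φ`. -/
noncomputable def stdNormalCDF (x : ℝ) : ℝ :=
  ∫ t in Set.Iic x, Real.exp (-t ^ 2 / 2) / Real.sqrt (2 * Real.pi)

open ProbabilityTheory Real

lemma stdNormalCDF_eq_gaussianReal (x : ℝ) :
    stdNormalCDF x = (gaussianReal 0 1).real (Iic x) := by
  rw [measureReal_def, gaussianReal_apply_eq_integral 0 one_ne_zero,
    ENNReal.toReal_ofReal (integral_nonneg fun _ => gaussianPDFReal_nonneg _ _ _)]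
  simp [stdNormalCDF, gaussianPDFReal, div_eq_inv_mul]

lemma lintegral_Ici_ofReal_exp_neg (a : ℝ) :
    ∫⁻ v in Ici a, ENNReal.ofReal (exp (-v)) = ENNReal.ofReal (exp (-a)) := by
  rw [setLIntegral_congr Ioi_ae_eq_Ici.symm, ← ofReal_integral_eq_lintegral_ofReal
    (integrableOn_exp_neg_Ioi a) (ae_of_all _ fun _ => (exp_pos _).le), integral_exp_neg_Ioi]

lemma lintegral_measure_Iic_mul_exp_neg (μ : Measure ℝ) [SFinite μ] {α : ℝ} (hα : 0 < α)
    (c : ℝ) :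
    ∫⁻ v, μ (Iic (α * v - c)) * ENNReal.ofReal (exp (-v)) =
      ∫⁻ x, ENNReal.ofReal (exp (-((x + c) / α))) ∂μ := by
  set S := {p : ℝ × ℝ | p.2 ≤ α * p.1 - c}
  set F : ℝ × ℝ → ENNReal := S.indicator fun p => ENNReal.ofReal (exp (-p.1))
  have hF : Measurable F := by
    refine Measurable.indicator (by fun_prop) ?_
    exact measurableSet_le measurable_snd ((measurable_fst.const_mul α).sub_const c)
  have hfiber_left (v : ℝ) :
      ∫⁻ x, F (v, x) ∂μ = μ (Iic (α * v - c)) * ENNReal.ofReal (exp (-v)) := by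
    rw [mul_comm, ← lintegral_indicator_const measurableSet_Iic]
    rfl
  have hfiber_right (x : ℝ) : ∫⁻ v, F (v, x) = ENNReal.ofReal (exp (-((x + c) / α))) := by
    have : (fun v => F (v, x)) =
        (Ici ((x + c) / α)).indicator fun v => ENNReal.ofReal (exp (-v)) := by
      ext v
      simp only [F, S, indicator, mem_ofPred_eq, mem_Ici, div_le_iff₀ hα]
      congr! 1
      constructor <;> intro h <;> linarith
    rw [this, lintegral_indicator measurableSet_Ici, lintegral_Ici_ofReal_exp_neg]
  simp_rw [← hfiber_left, ← hfiber_right]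
  exact lintegral_lintegral_swap hF.aemeasurable

lemma exp_neg_add_div (x c α : ℝ) : exp (-((x + c) / α)) = exp (-c / α) * exp (-α⁻¹ * x) := by
  rw [← exp_add]; ring_nf

section FiniteMeasure

variable (μ : Measure ℝ) [IsFiniteMeasure μ] {α : ℝ} (hα : 0 < α) (c : ℝ)
  (hμ : Integrable (fun x => exp (-α⁻¹ * x)) μ)
include hα hμ

lemma lintegral_ofReal_measureReal_Iic_mul_exp_neg :
    ∫⁻ v, ENNReal.ofReal (μ.real (Iic (α * v - c)) * exp (-v)) =
      ENNReal.ofReal (exp (-c / α) * mgf id μ (-α⁻¹)) := by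
  have hint : Integrable (fun x => exp (-((x + c) / α))) μ :=
    (hμ.const_mul _).congr (ae_of_all _ fun x => (exp_neg_add_div x c α).symm)
  have hfactor (v : ℝ) : ENNReal.ofReal (μ.real (Iic (α * v - c)) * exp (-v)) =
      μ (Iic (α * v - c)) * ENNReal.ofReal (exp (-v)) := by
    rw [ENNReal.ofReal_mul measureReal_nonneg, ofReal_measureReal]
  simp_rw [hfactor, lintegral_measure_Iic_mul_exp_neg μ hα c,
    ← ofReal_integral_eq_lintegral_ofReal hint (ae_of_all _ fun _ => (exp_pos _).le),
    exp_neg_add_div, integral_const_mul]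
  rfl

lemma integrable_measureReal_Iic_mul_exp_neg :
    Integrable fun v => μ.real (Iic (α * v - c)) * exp (-v) := by
  have hmono : Monotone fun a => μ.real (Iic a) := fun a b hab =>
    measureReal_mono (Iic_subset_Iic.2 hab)
  refine ⟨((hmono.measurable.comp (by fun_prop)).mul (by fun_prop)).aestronglyMeasurable, ?_⟩
  rw [hasFiniteIntegral_iff_ofReal (ae_of_all _ fun _ => by positivity),
    lintegral_ofReal_measureReal_Iic_mul_exp_neg μ hα c hμ]
  exact ENNReal.ofReal_lt_top

lemma integral_measureReal_Iic_mul_exp_neg :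
    ∫ v, μ.real (Iic (α * v - c)) * exp (-v) = exp (-c / α) * mgf id μ (-α⁻¹) := by
  rw [integral_eq_lintegral_of_nonneg_ae (ae_of_all _ fun _ => by positivity)
    (integrable_measureReal_Iic_mul_exp_neg μ hα c hμ).aestronglyMeasurable,
    lintegral_ofReal_measureReal_Iic_mul_exp_neg μ hα c hμ,
    ENNReal.toReal_ofReal (mul_nonneg (exp_pos _).le mgf_nonneg)]

end FiniteMeasure

theorem integral_stdNormalCDF_mul_exp_neg (α c : ℝ) (hα : 0 < α) :
    Integrable (fun v : ℝ => stdNormalCDF (α * v - c) * Real.exp (-v)) ∧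
    ∫ v : ℝ, stdNormalCDF (α * v - c) * Real.exp (-v) =
      Real.exp (0.5 / α ^ 2 - c / α) := by
  have hμ := integrable_exp_mul_gaussianReal (μ := 0) (v := 1) (-α⁻¹)
  simp_rw [stdNormalCDF_eq_gaussianReal]
  refine ⟨integrable_measureReal_Iic_mul_exp_neg _ hα c hμ, ?_⟩
  rw [integral_measureReal_Iic_mul_exp_neg _ hα c hμ, mgf_id_gaussianReal, ← exp_add]
  congr 1
  field_simp
  push_cast
  ring
end

section
/- Let Z be a standard normal random variable and E an independent random variable with the exponential distribution of rate 1, and let α > 0. Then for every z ∈ ℝ, P(Z + α·E ≤ z) = Φ(z) − exp(0.5/α² − z/α)·Φ(z − 1/α). -/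
/-!
Conditioning on `Z = x`, independence gives `P(Z + αE ≤ z) = E[F((z - Z) / α)]`, where
`F t = 1 - e^{-t}` for `t ≥ 0` (and `0` otherwise) is the exponential CDF. The factor
`e^{-(z - x)/α}` in the integrand is an exponential tilt of the Gaussian density,
`e^{c x} φ(x) = e^{c²/2} φ(x - c)`, which for `c = 1/α` turns its integral over `x ≤ z` into
`e^{1/(2α²) - z/α} Φ(z - 1/α)`.
-/

open MeasureTheory ProbabilityTheory Filter Set

/-- The exponential distribution of rate 1 on `ℝ`: density `e^{-x}` on `[0, ∞)`, `0` elsewhere. -/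
noncomputable def expMeasure1 : Measure ℝ :=
  volume.withDensity fun x => ENNReal.ofReal (if 0 ≤ x then Real.exp (-x) else 0)

open scoped NNReal

lemma expMeasure1_eq_expMeasure_one : expMeasure1 = expMeasure 1 := by
  rw [expMeasure1, expMeasure, gammaMeasure]
  congr 1 with x
  simp [gammaPDF, gammaPDFReal]

lemma setIntegral_gaussianPDFReal_Iic (μ : ℝ) {v : ℝ≥0} (hv : v ≠ 0) (x : ℝ) :
    ∫ t in Iic x, gaussianPDFReal μ v t = cdf (gaussianReal μ v) x := by
  rw [cdf_eq_real, measureReal_def, gaussianReal_apply_eq_integral _ hv,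
    ENNReal.toReal_ofReal (setIntegral_nonneg measurableSet_Iic
      fun t _ ↦ gaussianPDFReal_nonneg μ v t)]

lemma cdf_gaussianReal_eq_cdf_sub (μ : ℝ) (v : ℝ≥0) (x : ℝ) :
    cdf (gaussianReal μ v) x = cdf (gaussianReal 0 v) (x - μ) := by
  rw [← zero_add μ, ← gaussianReal_map_add_const, cdf_eq_real, cdf_eq_real,
    map_measureReal_apply (by fun_prop) measurableSet_Iic]
  congr 1
  ext t
  simp [le_sub_iff_add_le]

lemma stdNormalCDF_eq_cdf (x : ℝ) : stdNormalCDF x = cdf (gaussianReal 0 1) x := by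
  rw [← setIntegral_gaussianPDFReal_Iic 0 one_ne_zero, stdNormalCDF]
  congr 1 with t
  simp [gaussianPDFReal, div_eq_inv_mul]

lemma gaussianPDFReal_mul_exp_mul (μ : ℝ) {v : ℝ≥0} (hv : v ≠ 0) (c x : ℝ) :
    gaussianPDFReal μ v x * Real.exp (c * x)
      = Real.exp (c * μ + v * c ^ 2 / 2) * gaussianPDFReal (μ + v * c) v x := by
  have hv' : (v : ℝ) ≠ 0 := by exact_mod_cast hv
  rw [gaussianPDFReal, gaussianPDFReal, mul_left_comm, mul_assoc, ← Real.exp_add,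
    ← Real.exp_add]
  congr 2
  field_simp
  ring

lemma setIntegral_exp_mul_gaussianReal (μ : ℝ) {v : ℝ≥0} (hv : v ≠ 0) (c : ℝ)
    (s : Set ℝ) :
    ∫ x in s, Real.exp (c * x) ∂gaussianReal μ v
      = Real.exp (c * μ + v * c ^ 2 / 2) * (gaussianReal (μ + v * c) v).real s := by
  rw [gaussianReal_of_var_ne_zero _ hv,
    setIntegral_withDensity_eq_setIntegral_toReal_smul' s (measurable_gaussianPDF μ v)
      (ae_of_all _ fun _ ↦ gaussianPDF_lt_top), measureReal_def,
    gaussianReal_apply_eq_integral _ hv, ENNReal.toReal_ofReal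
      (setIntegral_nonneg_of_ae (ae_of_all _ fun t ↦ gaussianPDFReal_nonneg _ v t)),
    ← integral_const_mul]
  simp_rw [toReal_gaussianPDF, smul_eq_mul, gaussianPDFReal_mul_exp_mul μ hv]

lemma measureReal_prod_add_mul_le (μ ν : Measure ℝ) [SFinite μ] [IsProbabilityMeasure ν]
    {α : ℝ} (hα : 0 < α) (z : ℝ) :
    (μ.prod ν).real {p | p.1 + α * p.2 ≤ z} = ∫ x, cdf ν ((z - x) / α) ∂μ := by
  have hS : MeasurableSet {p : ℝ × ℝ | p.1 + α * p.2 ≤ z} :=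
    measurableSet_le (by fun_prop) measurable_const
  have hslice (x : ℝ) :
      Prod.mk x ⁻¹' {p : ℝ × ℝ | p.1 + α * p.2 ≤ z} = Iic ((z - x) / α) := by
    ext y
    simp [le_div_iff₀ hα, mul_comm y, le_sub_iff_add_le']
  rw [measureReal_def, Measure.prod_apply hS, integral_eq_lintegral_of_nonneg_ae
    (ae_of_all _ fun _ ↦ cdf_nonneg _ _)
    ((cdf ν).mono.measurable.comp (by fun_prop)).aestronglyMeasurable]
  simp_rw [hslice, ofReal_cdf]

lemma cdf_expMeasure_div_eq_indicator {r α : ℝ} (hr : 0 < r) (hα : 0 < α) (z x : ℝ) :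
    cdf (expMeasure r) ((z - x) / α)
      = (Iic z).indicator (fun x ↦ 1 - Real.exp (-(r * z / α)) * Real.exp (r / α * x)) x := by
  have hsupp : 0 ≤ (z - x) / α ↔ x ≤ z := by rw [le_div_iff₀ hα, zero_mul, sub_nonneg]
  simp only [cdf_expMeasure_eq hr, indicator_apply, mem_Iic, hsupp]
  split_ifs
  · rw [← Real.exp_add]
    ring_nf
  · rfl

lemma integral_cdf_expMeasure_one_gaussianReal {α : ℝ} (hα : 0 < α) (z : ℝ) :
    ∫ x, cdf (expMeasure 1) ((z - x) / α) ∂gaussianReal 0 1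
      = stdNormalCDF z - Real.exp (0.5 / α ^ 2 - z / α) * stdNormalCDF (z - 1 / α) := by
  simp_rw [cdf_expMeasure_div_eq_indicator one_pos hα, one_mul,
    integral_indicator measurableSet_Iic]
  rw [integral_sub (integrable_const _)
      ((integrable_exp_mul_gaussianReal _).integrableOn.const_mul _),
    integral_const, integral_const_mul, setIntegral_exp_mul_gaussianReal 0 one_ne_zero,
    measureReal_restrict_apply_univ,
    ← cdf_eq_real, ← cdf_eq_real, cdf_gaussianReal_eq_cdf_sub (0 + _), stdNormalCDF_eq_cdf,
    stdNormalCDF_eq_cdf, smul_eq_mul, mul_one, ← mul_assoc, ← Real.exp_add]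
  simp only [NNReal.coe_one, one_mul, mul_zero, zero_add]
  congr 3
  ring

theorem cdf_normal_plus_scaled_exponential
    {Ω : Type*} [MeasureSpace Ω] [IsProbabilityMeasure (ℙ : Measure Ω)]
    (Z E : Ω → ℝ) (hZ : Measurable Z) (hE : Measurable E)
    (hlawZ : Measure.map Z ℙ = gaussianReal 0 1)
    (hlawE : Measure.map E ℙ = expMeasure1)
    (hindep : IndepFun Z E ℙ)
    (α : ℝ) (hα : 0 < α) (z : ℝ) :
    (ℙ {ω | Z ω + α * E ω ≤ z}).toReal =
      stdNormalCDF z - Real.exp (0.5 / α ^ 2 - z / α) * stdNormalCDF (z - 1 / α) := by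
  have hjoint :
      Measure.map (fun ω ↦ (Z ω, E ω)) ℙ = (gaussianReal 0 1).prod (expMeasure 1) := by
    rw [← hlawZ, ← expMeasure1_eq_expMeasure_one, ← hlawE]
    exact (indepFun_iff_map_prod_eq_prod_map_map hZ.aemeasurable hE.aemeasurable).mp hindep
  have := isProbabilityMeasure_expMeasure one_pos
  calc (ℙ {ω | Z ω + α * E ω ≤ z}).toReal
      = ((gaussianReal 0 1).prod (expMeasure 1)).real {p | p.1 + α * p.2 ≤ z} := by
        rw [← hjoint, map_measureReal_apply (hZ.prodMk hE)
          (measurableSet_le (by fun_prop) measurable_const)]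
        rfl
    _ = ∫ x, cdf (expMeasure 1) ((z - x) / α) ∂gaussianReal 0 1 :=
        measureReal_prod_add_mul_le _ _ hα z
    _ = _ := integral_cdf_expMeasure_one_gaussianReal hα z
end

section
/- Fix δ₁, δ₂ > 1 and ρ₁₂ > 0, and let ℓ : (0, ∞) × (0, ∞) → ℝ be the function of the premise. Then ℓ(x₁, x₂) = ℓ(x₂, x₁) for all x₁, x₂ > 0 if and only if δ₁ = δ₂. -/
open MeasureTheory Filter Set

/-- The stable upper tail dependence function of Proposition 1. -/
noncomputable def ellLimit (δ₁ δ₂ ρ₁₂ x₁ x₂ : ℝ) : ℝ :=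
  let δ₁₂ := δ₁ + δ₂
  let y₁ := x₁ * (1 - 1 / δ₁)
  let y₂ := x₂ * (1 - 1 / δ₂)
  let δ₁s := 1 / (δ₁ - 1) - 1 / (δ₁₂ - 1)
  let δ₂s := 1 / (δ₂ - 1) - 1 / (δ₁₂ - 1)
  δ₁ * y₁ / (δ₁ - 1) * stdNormalCDF (ρ₁₂ / 2 + Real.log (y₁ / y₂) / ρ₁₂)
    + δ₂ * y₂ / (δ₂ - 1) * stdNormalCDF (ρ₁₂ / 2 + Real.log (y₂ / y₁) / ρ₁₂)
    + y₂ ^ δ₂ * y₁ ^ (1 - δ₂) * δ₂s * Real.exp (0.5 * δ₂ * (δ₂ - 1) * ρ₁₂ ^ 2) *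
        stdNormalCDF (ρ₁₂ * (0.5 - δ₂) + Real.log (y₁ / y₂) / ρ₁₂)
    + y₁ ^ δ₁ * y₂ ^ (1 - δ₁) * δ₁s * Real.exp (0.5 * δ₁ * (δ₁ - 1) * ρ₁₂ ^ 2) *
        stdNormalCDF (ρ₁₂ * (0.5 - δ₁) + Real.log (y₂ / y₁) / ρ₁₂)

/-!
Put `x₁ = e^{-s}`, `x₂ = 1` and let `s → ∞`. Because the Gaussian tails are thinner than every
exponential, `ℓ(e^{-s}, 1) = 1 + K(δ₁, δ₂) e^{-δ₁ s}` up to an error that decays faster than any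
exponential, with an explicit constant `K(δ₁, δ₂) > 0`. The formula for `ℓ` is invariant under
exchanging both the `δᵢ` and the `xᵢ`, so `ℓ(1, e^{-s})` has the same expansion with `δ₁` and `δ₂`
exchanged. If `ℓ` were symmetric and `δ₁ < δ₂`, the difference
`K(δ₁, δ₂) e^{-δ₁ s} - K(δ₂, δ₁) e^{-δ₂ s}` would decay superexponentially, forcing `K(δ₁, δ₂) = 0`.
-/

open Real Topology

lemma one_sub_one_div_pos {δ : ℝ} (hδ : 1 < δ) : 0 < 1 - 1 / δ := by
  rw [sub_pos, div_lt_one (by linarith)]; exact hδ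

lemma exp_neg_mul_rpow (s a : ℝ) {x : ℝ} (hx : 0 ≤ x) :
    (exp (-s) * x) ^ a = exp (-a * s) * x ^ a := by
  rw [mul_rpow (exp_pos _).le hx, ← exp_mul]; ring_nf

noncomputable def stdNormalPDF (t : ℝ) : ℝ := exp (-t ^ 2 / 2) / √(2 * π)

lemma stdNormalCDF_eq_integral (x : ℝ) : stdNormalCDF x = ∫ t in Iic x, stdNormalPDF t := rfl

lemma stdNormalPDF_nonneg (t : ℝ) : 0 ≤ stdNormalPDF t := by
  unfold stdNormalPDF; positivity

lemma stdNormalPDF_neg (t : ℝ) : stdNormalPDF (-t) = stdNormalPDF t := by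
  simp only [stdNormalPDF, neg_sq]

lemma stdNormalPDF_eq_exp_mul_sq (t : ℝ) :
    stdNormalPDF t = exp (-(1 / 2) * t ^ 2) / √(2 * π) := by
  unfold stdNormalPDF; ring_nf

lemma integrable_stdNormalPDF : Integrable stdNormalPDF := by
  simp only [funext stdNormalPDF_eq_exp_mul_sq]
  exact (integrable_exp_neg_mul_sq (by norm_num)).div_const _

lemma integral_stdNormalPDF : ∫ t, stdNormalPDF t = 1 := by
  simp only [stdNormalPDF_eq_exp_mul_sq, integral_div, integral_gaussian]
  rw [div_eq_one_iff_eq (by positivity)]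
  ring_nf

lemma stdNormalCDF_nonneg (x : ℝ) : 0 ≤ stdNormalCDF x :=
  integral_nonneg stdNormalPDF_nonneg

lemma stdNormalCDF_neg (x : ℝ) : stdNormalCDF (-x) = 1 - stdNormalCDF x := by
  have hsplit := integral_add_compl (measurableSet_Iic (a := x)) integrable_stdNormalPDF
  rw [compl_Iic, integral_stdNormalPDF] at hsplit
  rw [stdNormalCDF_eq_integral, stdNormalCDF_eq_integral, ← neg_neg x, ← integral_comp_neg_Ioi,
    neg_neg]
  simp only [stdNormalPDF_neg]
  linarith

lemma stdNormalPDF_le_exp_mul {M t : ℝ} (hM : 0 ≤ M) (ht : t ≤ -(2 * M)) :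
    stdNormalPDF t ≤ exp (M * t) := by
  have hsqrt : 1 ≤ √(2 * π) := by
    rw [one_le_sqrt]; nlinarith [pi_gt_three]
  calc stdNormalPDF t ≤ exp (-t ^ 2 / 2) := div_le_self (exp_pos _).le hsqrt
    _ ≤ exp (M * t) := exp_le_exp.mpr (by nlinarith)

lemma stdNormalCDF_le_exp_mul {M x : ℝ} (hM : 0 < M) (hx : x ≤ -(2 * M)) :
    stdNormalCDF x ≤ exp (M * x) / M := by
  rw [stdNormalCDF_eq_integral, ← integral_exp_mul_Iic hM]
  refine setIntegral_mono_on integrable_stdNormalPDF.integrableOn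
    (integrableOn_exp_mul_Iic hM x) measurableSet_Iic fun t ht => ?_
  exact stdNormalPDF_le_exp_mul hM.le ((mem_Iic.mp ht).trans hx)

lemma tendsto_exp_mul_stdNormalCDF_atBot (β : ℝ) :
    Tendsto (fun x => exp (β * x) * stdNormalCDF x) atBot (𝓝 0) := by
  set M := |β| + 1
  have hM : 0 < M := by positivity
  have hβM : 0 < β + M := by linarith [neg_abs_le β]
  have hbound : Tendsto (fun x => exp ((β + M) * x) / M) atBot (𝓝 0) := by
    simpa using (tendsto_exp_atBot.comp (tendsto_id.const_mul_atBot hβM)).div_const M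
  refine squeeze_zero' (Eventually.of_forall fun x => ?_) ?_ hbound
  · exact mul_nonneg (exp_pos _).le (stdNormalCDF_nonneg x)
  filter_upwards [eventually_le_atBot (-(2 * M))] with x hx
  calc exp (β * x) * stdNormalCDF x ≤ exp (β * x) * (exp (M * x) / M) :=
        mul_le_mul_of_nonneg_left (stdNormalCDF_le_exp_mul hM hx) (exp_pos _).le
    _ = exp ((β + M) * x) / M := by rw [← mul_div_assoc, ← exp_add, ← add_mul]

def SuperexpDecay (f : ℝ → ℝ) : Prop :=
  ∀ β : ℝ, Tendsto (fun s => exp (β * s) * f s) atTop (𝓝 0)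

namespace SuperexpDecay

variable {f g : ℝ → ℝ}

lemma add (hf : SuperexpDecay f) (hg : SuperexpDecay g) : SuperexpDecay fun s => f s + g s :=
  fun β => by simpa only [mul_add, add_zero] using (hf β).add (hg β)

lemma sub (hf : SuperexpDecay f) (hg : SuperexpDecay g) : SuperexpDecay fun s => f s - g s :=
  fun β => by simpa only [mul_sub, sub_zero] using (hf β).sub (hg β)

lemma const_mul (hf : SuperexpDecay f) (C : ℝ) : SuperexpDecay fun s => C * f s :=
  fun β => by simpa only [mul_left_comm C, mul_zero] using (hf β).const_mul C

lemma exp_mul (hf : SuperexpDecay f) (a : ℝ) : SuperexpDecay fun s => exp (a * s) * f s :=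
  fun β => by simpa only [← mul_assoc, ← exp_add, ← add_mul] using hf (β + a)

lemma coeff_eq_zero_of_lt {a b A B : ℝ} (hab : a < b)
    (h : SuperexpDecay fun s => A * exp (-a * s) - B * exp (-b * s)) : A = 0 := by
  have hB : Tendsto (fun s => A - B * exp ((a - b) * s)) atTop (𝓝 (A - B * 0)) :=
    tendsto_const_nhds.sub <| (tendsto_exp_atBot.comp <|
      tendsto_id.const_mul_atTop_of_neg (sub_neg.mpr hab)).const_mul B
  rw [mul_zero, sub_zero] at hB
  refine tendsto_nhds_unique (hB.congr fun s => ?_) (h a)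
  have e₁ : exp (a * s) * exp (-a * s) = 1 := by
    rw [← exp_add, show a * s + -a * s = 0 by ring, exp_zero]
  have e₂ : exp (a * s) * exp (-b * s) = exp ((a - b) * s) := by
    rw [← exp_add]; ring_nf
  linear_combination (-A) * e₁ + B * e₂

end SuperexpDecay

lemma superexpDecay_stdNormalCDF {ρ : ℝ} (hρ : 0 < ρ) (c d : ℝ) :
    SuperexpDecay fun s => stdNormalCDF (c + (d - s) / ρ) := by
  intro β
  have hu : Tendsto (fun s => c + (d - s) / ρ) atTop atBot := by
    have := (tendsto_id.const_mul_atTop_of_neg (neg_lt_zero.mpr (inv_pos.mpr hρ))).atBot_add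
      (tendsto_const_nhds (x := c + d / ρ))
    refine this.congr fun s => ?_
    simp only [id]; ring
  have := ((tendsto_exp_mul_stdNormalCDF_atBot (-β * ρ)).comp hu).const_mul (exp (β * (ρ * c + d)))
  rw [mul_zero] at this
  refine this.congr fun s => ?_
  simp only [Function.comp, ← mul_assoc, ← exp_add]
  congr 3
  field_simp
  ring

lemma superexpDecay_stdNormalCDF_sub_one {ρ : ℝ} (hρ : 0 < ρ) (c d : ℝ) :
    SuperexpDecay fun s => stdNormalCDF (c + (s - d) / ρ) - 1 := by
  refine fun β => ((superexpDecay_stdNormalCDF hρ (-c) d).const_mul (-1) β).congr fun s => ?_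
  dsimp only
  rw [show -c + (d - s) / ρ = -(c + (s - d) / ρ) by ring, stdNormalCDF_neg]
  ring

noncomputable def ellCoeff (δ₁ δ₂ ρ : ℝ) : ℝ :=
  (1 - 1 / δ₁) ^ δ₁ * (1 - 1 / δ₂) ^ (1 - δ₁) * (1 / (δ₁ - 1) - 1 / (δ₁ + δ₂ - 1)) *
    exp (0.5 * δ₁ * (δ₁ - 1) * ρ ^ 2)

lemma ellCoeff_pos {δ₁ δ₂ : ℝ} (hδ₁ : 1 < δ₁) (hδ₂ : 1 < δ₂) (ρ : ℝ) : 0 < ellCoeff δ₁ δ₂ ρ := by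
  have hδ₁s : 0 < 1 / (δ₁ - 1) - 1 / (δ₁ + δ₂ - 1) :=
    sub_pos.mpr (one_div_lt_one_div_of_lt (by linarith) (by linarith))
  have := rpow_pos_of_pos (one_sub_one_div_pos hδ₁) δ₁
  have := rpow_pos_of_pos (one_sub_one_div_pos hδ₂) (1 - δ₁)
  unfold ellCoeff; positivity

lemma ellLimit_swap (δ₁ δ₂ ρ x₁ x₂ : ℝ) : ellLimit δ₂ δ₁ ρ x₂ x₁ = ellLimit δ₁ δ₂ ρ x₁ x₂ := by
  simp only [ellLimit]; ring

lemma ellLimit_exp_neg_one {δ₁ δ₂ : ℝ} (hδ₁ : 1 < δ₁) (hδ₂ : 1 < δ₂) (ρ s : ℝ) {L : ℝ}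
    (hL : L = log (1 - 1 / δ₁) - log (1 - 1 / δ₂)) :
    ellLimit δ₁ δ₂ ρ (exp (-s)) 1 =
      exp (-s) * stdNormalCDF (ρ / 2 + (L - s) / ρ) + stdNormalCDF (ρ / 2 + (s - L) / ρ)
      + ellCoeff δ₂ δ₁ ρ *
          (exp (-(1 - δ₂) * s) * stdNormalCDF (ρ * (0.5 - δ₂) + (L - s) / ρ))
      + ellCoeff δ₁ δ₂ ρ * (exp (-δ₁ * s) * stdNormalCDF (ρ * (0.5 - δ₁) + (s - L) / ρ)) := by
  have ha₁ := one_sub_one_div_pos hδ₁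
  have ha₂ := one_sub_one_div_pos hδ₂
  have hlog : log (exp (-s) * (1 - 1 / δ₁) / (1 - 1 / δ₂)) = L - s := by
    rw [log_div (by positivity) ha₂.ne', log_mul (exp_ne_zero _) ha₁.ne', log_exp, hL]; ring
  have hlog' : log ((1 - 1 / δ₂) / (exp (-s) * (1 - 1 / δ₁))) = s - L := by
    rw [← inv_div, log_inv, hlog]; ring
  have hc₁ : δ₁ * (exp (-s) * (1 - 1 / δ₁)) / (δ₁ - 1) = exp (-s) := by
    field_simp [show δ₁ - 1 ≠ 0 by linarith]
  have hc₂ : δ₂ * (1 - 1 / δ₂) / (δ₂ - 1) = 1 := by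
    field_simp [show δ₂ - 1 ≠ 0 by linarith]
  simp only [ellLimit, one_mul]
  rw [hlog, hlog', hc₁, hc₂, exp_neg_mul_rpow _ _ ha₁.le, exp_neg_mul_rpow _ _ ha₁.le, ellCoeff,
    ellCoeff]
  ring

lemma superexpDecay_ellLimit_sub {δ₁ δ₂ ρ : ℝ} (hδ₁ : 1 < δ₁) (hδ₂ : 1 < δ₂) (hρ : 0 < ρ) :
    SuperexpDecay fun s =>
      ellLimit δ₁ δ₂ ρ (exp (-s)) 1 - 1 - ellCoeff δ₁ δ₂ ρ * exp (-δ₁ * s) := by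
  set L := log (1 - 1 / δ₁) - log (1 - 1 / δ₂) with hL
  have h₁ := (superexpDecay_stdNormalCDF hρ (ρ / 2) L).exp_mul (-1)
  have h₂ := superexpDecay_stdNormalCDF_sub_one hρ (ρ / 2) L
  have h₃ := ((superexpDecay_stdNormalCDF hρ (ρ * (0.5 - δ₂)) L).exp_mul
    (-(1 - δ₂))).const_mul (ellCoeff δ₂ δ₁ ρ)
  have h₄ := ((superexpDecay_stdNormalCDF_sub_one hρ (ρ * (0.5 - δ₁)) L).exp_mul
    (-δ₁)).const_mul (ellCoeff δ₁ δ₂ ρ)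
  refine fun β => ((((h₁.add h₂).add h₃).add h₄) β).congr fun s => ?_
  dsimp only
  rw [ellLimit_exp_neg_one hδ₁ hδ₂ ρ s hL, neg_one_mul]
  ring

lemma not_lt_of_ellLimit_symm {δ₁ δ₂ ρ : ℝ} (hδ₁ : 1 < δ₁) (hδ₂ : 1 < δ₂) (hρ : 0 < ρ)
    (h : ∀ x₁ x₂ : ℝ, 0 < x₁ → 0 < x₂ → ellLimit δ₁ δ₂ ρ x₁ x₂ = ellLimit δ₁ δ₂ ρ x₂ x₁) :
    ¬δ₁ < δ₂ := by
  intro hlt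
  have hdiff := (superexpDecay_ellLimit_sub hδ₂ hδ₁ hρ).sub (superexpDecay_ellLimit_sub hδ₁ hδ₂ hρ)
  refine (ellCoeff_pos hδ₁ hδ₂ ρ).ne' <|
    SuperexpDecay.coeff_eq_zero_of_lt (B := ellCoeff δ₂ δ₁ ρ) hlt fun β => ?_
  refine (hdiff β).congr fun s => ?_
  dsimp only
  rw [ellLimit_swap δ₁ δ₂ ρ 1, h 1 (exp (-s)) one_pos (exp_pos _)]
  ring

theorem ellLimit_symm_iff (δ₁ δ₂ ρ₁₂ : ℝ) (hδ₁ : 1 < δ₁) (hδ₂ : 1 < δ₂) (hρ : 0 < ρ₁₂) :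
    (∀ x₁ x₂ : ℝ, 0 < x₁ → 0 < x₂ → ellLimit δ₁ δ₂ ρ₁₂ x₁ x₂ = ellLimit δ₁ δ₂ ρ₁₂ x₂ x₁) ↔
      δ₁ = δ₂ := by
  constructor
  · intro h
    have h' (x₁ x₂ : ℝ) (hx₁ : 0 < x₁) (hx₂ : 0 < x₂) :
        ellLimit δ₂ δ₁ ρ₁₂ x₁ x₂ = ellLimit δ₂ δ₁ ρ₁₂ x₂ x₁ := by
      rw [ellLimit_swap δ₁ δ₂ ρ₁₂ x₂, ellLimit_swap δ₁ δ₂ ρ₁₂ x₁, h x₂ x₁ hx₂ hx₁]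
    exact le_antisymm (not_lt.mp (not_lt_of_ellLimit_symm hδ₂ hδ₁ hρ h'))
      (not_lt.mp (not_lt_of_ellLimit_symm hδ₁ hδ₂ hρ h))
  · rintro rfl x₁ x₂ - -
    exact ellLimit_swap δ₁ δ₁ ρ₁₂ x₂ x₁
end
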